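/- Let m ≥ 0 be an integer and λ, γ > 0 real numbers. For any number T* > E_m(0) there exists a constant C > 0 such that for all t ≥ 0, ∫₀ᵗ e^{−γ(t−τ)} L_m(T* + τ)^{−λ} dτ ≤ C · L_m(T* + t)^{−λ}. -/

import Mathlib

/-- Iterated logarithm: `Lm 0 t = t`, `Lm (m+1) t = log (Lm m t)`. -/
noncomputable def Lm : ℕ → ℝ → ℝ
  | 0, t => t
  | n + 1, t => Real.log (Lm n t)

/-- Iterated exponential: `Em 0 t = t`, `Em (m+1) t = exp (Em m t)`. -/
noncomputable def Em : ℕ → ℝ → ℝ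
  | 0, t => t
  | n + 1, t => Real.exp (Em n t)

/-!
Past the threshold `Em m 1` every iterated logarithm `Lm k` with `k ≤ m` is at least `1`, so
`log (Lm m s) = Lm (m + 1) s` grows at rate at most `1 / s`. Hence, for any `δ > 0`, the weight
`f τ = Lm m (T* + τ) ^ (-λ)` decays no faster than `exp (-δ τ)`: `f τ ≤ K exp (δ (t - τ)) f t`
for `τ ≤ t`, the constant `K` absorbing the bounded interval before the threshold is reached.
With `δ = γ / 2` the kernel `exp (-γ (t - τ))` then beats this decay, and integrating
`K f t exp (-(γ / 2) (t - τ))` gives the bound with `C = 2 K / γ`.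
-/

open Real Set

lemma Em_succ_eq_Em_exp (m : ℕ) (t : ℝ) : Em (m + 1) t = Em m (exp t) := by
  induction m with
  | zero => rfl
  | succ n ih => exact congrArg exp ih

lemma Em_strictMono (m : ℕ) : StrictMono (Em m) := by
  induction m with
  | zero => exact strictMono_id
  | succ n ih => exact exp_strictMono.comp ih

lemma Em_lt_Em_succ (m : ℕ) (t : ℝ) : Em m t < Em (m + 1) t := by
  induction m with
  | zero => exact (add_one_le_exp t).trans_lt' (lt_add_one t)
  | succ n ih => exact exp_lt_exp.2 ih

lemma Em_Lm {m : ℕ} {x : ℝ} (hx : Em m 0 < x) : Em m (Lm m x) = x := by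
  induction m with
  | zero => rfl
  | succ n ih =>
    have hx' : Em n 0 < x := (Em_lt_Em_succ n 0).trans hx
    have hpos : 0 < Lm n x := (Em_strictMono n).lt_iff_lt.1 ((ih hx').symm ▸ hx')
    rw [Em_succ_eq_Em_exp, Lm, exp_log hpos, ih hx']

lemma lt_Lm_iff {m : ℕ} {x y : ℝ} (hx : Em m 0 < x) : y < Lm m x ↔ Em m y < x := by
  rw [← (Em_strictMono m).lt_iff_lt, Em_Lm hx]

lemma le_Lm_iff {m : ℕ} {x y : ℝ} (hx : Em m 0 < x) : y ≤ Lm m x ↔ Em m y ≤ x := by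
  rw [← (Em_strictMono m).le_iff_le, Em_Lm hx]

lemma Lm_pos {m : ℕ} {x : ℝ} (hx : Em m 0 < x) : 0 < Lm m x := (lt_Lm_iff hx).2 hx

lemma Lm_strictMonoOn (m : ℕ) : StrictMonoOn (Lm m) (Ioi (Em m 0)) := fun _ hx _ hx' hxx' =>
  (lt_Lm_iff hx').2 ((Em_Lm hx).symm ▸ hxx')

lemma Lm_succ_monotoneOn (m : ℕ) : MonotoneOn (Lm (m + 1)) (Ioi (Em m 0)) :=
  fun _ hx _ hx' hxx' => log_le_log (Lm_pos hx) ((Lm_strictMonoOn m).monotoneOn hx hx' hxx')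

lemma log_sub_log_le_div {x y : ℝ} (hx : 0 < x) (hy : 0 < y) : log y - log x ≤ (y - x) / x := by
  rw [← log_div hy.ne' hx.ne', sub_div, div_self hx.ne']
  exact log_le_sub_one_of_pos (div_pos hy hx)

lemma Lm_succ_sub_le {m : ℕ} {s s' : ℝ} (hs : Em m 1 ≤ s) (hss' : s ≤ s') :
    Lm (m + 1) s' - Lm (m + 1) s ≤ (s' - s) / s := by
  induction m with
  | zero =>
    have hs0 : 0 < s := one_pos.trans_le hs
    exact log_sub_log_le_div hs0 (hs0.trans_le hss')
  | succ n ih =>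
    have hs0 : Em (n + 1) 0 < s := (Em_strictMono _ one_pos).trans_le hs
    have hL : 1 ≤ Lm (n + 1) s := (le_Lm_iff hs0).2 hs
    have hL' : 0 < Lm (n + 1) s' := Lm_pos (hs0.trans_le hss')
    have hinc := ih ((Em_lt_Em_succ n 1).le.trans hs)
    have hquot : 0 ≤ (s' - s) / s :=
      div_nonneg (sub_nonneg.2 hss') ((exp_pos (Em n 0)).trans hs0).le
    calc Lm (n + 2) s' - Lm (n + 2) s ≤ (Lm (n + 1) s' - Lm (n + 1) s) / Lm (n + 1) s :=
          log_sub_log_le_div (one_pos.trans_le hL) hL'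
      _ ≤ (s' - s) / s / Lm (n + 1) s := by gcongr
      _ ≤ (s' - s) / s := div_le_self hquot hL

lemma Lm_succ_sub_le_mul {m : ℕ} {δ s s' : ℝ} (hδ : 0 < δ) (hs : Em m 1 ≤ s) (hδs : δ⁻¹ ≤ s)
    (hss' : s ≤ s') : Lm (m + 1) s' - Lm (m + 1) s ≤ δ * (s' - s) := by
  have hs0 : 0 < s := (inv_pos.2 hδ).trans_le hδs
  calc Lm (m + 1) s' - Lm (m + 1) s ≤ s⁻¹ * (s' - s) := by
        rw [← div_eq_inv_mul]; exact Lm_succ_sub_le hs hss'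
    _ ≤ δ * (s' - s) :=
        mul_le_mul_of_nonneg_right ((inv_le_comm₀ hδ hs0).1 hδs) (sub_nonneg.2 hss')

lemma MonotoneOn.sub_le_of_sub_le_mul {g : ℝ → ℝ} {a b δ : ℝ} (hg : MonotoneOn g (Ici a))
    (hab : a ≤ b) (hδ : 0 ≤ δ) (hrate : ∀ s s', b ≤ s → s ≤ s' → g s' - g s ≤ δ * (s' - s))
    {s s' : ℝ} (hs : a ≤ s) (hss' : s ≤ s') : g s' - g s ≤ (g b - g a) + δ * (s' - s) := by
  have hgab : g a ≤ g b := hg self_mem_Ici hab hab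
  rcases le_total b s with hbs | hsb
  · linarith [hrate s s' hbs hss']
  rcases le_total s' b with hs'b | hbs'
  · linarith [hg (hs.trans hss') hab hs'b, hg self_mem_Ici hs hs,
      mul_nonneg hδ (sub_nonneg.2 hss')]
  · linarith [hrate b s' le_rfl hbs', hg self_mem_Ici hs hs,
      mul_le_mul_of_nonneg_left (sub_le_sub_right hsb s') hδ]

lemma exists_Lm_rpow_neg_le_mul_exp {m : ℕ} {T lam δ : ℝ} (hT : Em m 0 < T) (hlam : 0 < lam)
    (hδ : 0 < δ) : ∃ K > 0, ∀ s s', T ≤ s → s ≤ s' →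
      Lm m s ^ (-lam) ≤ K * exp (δ * (s' - s)) * Lm m s' ^ (-lam) := by
  set b := max (Em m 1) (max T (δ / lam)⁻¹)
  have hrate : ∀ s s', b ≤ s → s ≤ s' → Lm (m + 1) s' - Lm (m + 1) s ≤ δ / lam * (s' - s) :=
    fun s s' hbs hss' => Lm_succ_sub_le_mul (by positivity) ((le_max_left _ _).trans hbs)
      (((le_max_right _ _).trans (le_max_right _ _)).trans hbs) hss'
  have hmono := (Lm_succ_monotoneOn m).mono (Ici_subset_Ioi.2 hT)
  refine ⟨exp (lam * (Lm (m + 1) b - Lm (m + 1) T)), exp_pos _, fun s s' hs hss' => ?_⟩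
  have hinc := hmono.sub_le_of_sub_le_mul (b := b) ((le_max_left _ _).trans (le_max_right _ _))
    (by positivity) hrate hs hss'
  have hscaled := mul_le_mul_of_nonneg_left hinc hlam.le
  rw [mul_add, ← mul_assoc, mul_div_cancel₀ _ hlam.ne'] at hscaled
  rw [rpow_def_of_pos (Lm_pos (hT.trans_le hs)), rpow_def_of_pos (Lm_pos (by linarith)),
    ← exp_add, ← exp_add, exp_le_exp]
  simp only [Lm] at hscaled ⊢
  linarith

lemma integral_exp_neg_mul_sub_le {c t : ℝ} (hc : 0 < c) :
    ∫ τ in (0:ℝ)..t, exp (-c * (t - τ)) ≤ 1 / c := by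
  have hderiv : ∀ τ ∈ uIcc 0 t,
      HasDerivAt (fun τ => exp (-c * (t - τ)) / c) (exp (-c * (t - τ))) τ := by
    intro τ _
    refine ((((hasDerivAt_id' τ).const_sub t).const_mul (-c)).exp.div_const c).congr_deriv ?_
    field_simp
  rw [intervalIntegral.integral_eq_sub_of_hasDerivAt hderiv
    (by apply Continuous.intervalIntegrable; fun_prop)]
  simp only [sub_self, mul_zero, exp_zero]
  rw [sub_le_iff_le_add]
  exact le_add_of_nonneg_right (div_nonneg (exp_pos _).le hc.le)

lemma integral_exp_mul_le_of_le_mul_exp {f : ℝ → ℝ} {γ δ K t : ℝ} (hδγ : δ < γ) (ht : 0 ≤ t)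
    (hf0 : ∀ τ ∈ Icc 0 t, 0 ≤ f τ) (hf : ∀ τ ∈ Icc 0 t, f τ ≤ K * exp (δ * (t - τ)) * f t) :
    ∫ τ in (0:ℝ)..t, exp (-γ * (t - τ)) * f τ ≤ K / (γ - δ) * f t := by
  have hKf : 0 ≤ K * f t := by
    have := hf t ⟨ht, le_rfl⟩
    rw [sub_self, mul_zero, exp_zero, mul_one] at this
    exact (hf0 t ⟨ht, le_rfl⟩).trans this
  have hbound : ∀ τ ∈ Ioc 0 t,
      exp (-γ * (t - τ)) * f τ ≤ K * f t * exp (-(γ - δ) * (t - τ)) := by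
    intro τ hτ
    calc exp (-γ * (t - τ)) * f τ ≤ exp (-γ * (t - τ)) * (K * exp (δ * (t - τ)) * f t) :=
          mul_le_mul_of_nonneg_left (hf τ (Ioc_subset_Icc_self hτ)) (exp_pos _).le
      _ = K * f t * exp (-(γ - δ) * (t - τ)) := by
          rw [show -(γ - δ) * (t - τ) = -γ * (t - τ) + δ * (t - τ) by ring, exp_add]; ring
  calc ∫ τ in (0:ℝ)..t, exp (-γ * (t - τ)) * f τ
      ≤ ∫ τ in (0:ℝ)..t, K * f t * exp (-(γ - δ) * (t - τ)) := by
        simp only [intervalIntegral.integral_of_le ht]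
        refine MeasureTheory.integral_mono_of_nonneg ?_ ?_
          (MeasureTheory.ae_restrict_of_forall_mem measurableSet_Ioc hbound)
        · exact MeasureTheory.ae_restrict_of_forall_mem measurableSet_Ioc fun τ hτ =>
            mul_nonneg (exp_pos _).le (hf0 τ (Ioc_subset_Icc_self hτ))
        · exact (by fun_prop : Continuous fun τ => K * f t * exp (-(γ - δ) * (t - τ))
            ).integrableOn_Ioc
    _ = K * f t * ∫ τ in (0:ℝ)..t, exp (-(γ - δ) * (t - τ)) :=
        intervalIntegral.integral_const_mul _ _
    _ ≤ K * f t * (1 / (γ - δ)) :=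
        mul_le_mul_of_nonneg_left (integral_exp_neg_mul_sub_le (sub_pos.2 hδγ)) hKf
    _ = K / (γ - δ) * f t := by ring

/-- Lemma 2.5 of [CaH3]: the convolution integral inequality. -/
theorem stmt1 (m : ℕ) (lam γ : ℝ) (hlam : 0 < lam) (hγ : 0 < γ)
    (Tstar : ℝ) (hT : Em m 0 < Tstar) :
    ∃ C > (0:ℝ), ∀ t ≥ (0:ℝ),
      (∫ τ in (0:ℝ)..t, Real.exp (-γ * (t - τ)) * (Lm m (Tstar + τ)) ^ (-lam))
        ≤ C * (Lm m (Tstar + t)) ^ (-lam) := by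
  obtain ⟨K, hK, hdecay⟩ := exists_Lm_rpow_neg_le_mul_exp hT hlam (half_pos hγ)
  refine ⟨K / (γ - γ / 2), div_pos hK (by linarith), fun t ht => ?_⟩
  refine integral_exp_mul_le_of_le_mul_exp (by linarith) ht
    (fun τ hτ => (rpow_pos_of_pos (Lm_pos (by linarith [hτ.1])) _).le) fun τ hτ => ?_
  simpa using hdecay (Tstar + τ) (Tstar + t) (by linarith [hτ.1]) (by linarith [hτ.2])
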